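/- arXiv:quant-ph/0211064 — 2 statements merged into one kernel-verified Lean document; each statement's English description precedes it below -/
import Mathlib

section
/- Let E : 𝒜 → L(H) be a regular observable. If (Aᵢ)_{i∈ℕ} ⊂ ran(E) is a summable sequence, i.e., A₁ + ⋯ + Aₙ ≤ I for each n ∈ ℕ, then there exists a sequence (Xᵢ) of pairwise disjoint sets in 𝒜 with Aᵢ = E(Xᵢ) for all i; in particular sup_n (A₁ + ⋯ + Aₙ) = ∑ᵢ Aᵢ = E(⋃ᵢ Xᵢ) belongs to ran(E). -/
open MeasureTheory

noncomputable section

/-- The numerical "expectation" `⟪φ, T φ⟫` of an operator `T` at a vector `φ`. -/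
def ev {H : Type*} [NormedAddCommGroup H] [InnerProductSpace ℂ H]
    (T : H →L[ℂ] H) (φ : H) : ℂ :=
  @inner ℂ H _ φ (T φ)

/-- An observable: a positive, normalized, weakly σ-additive operator measure, defined on
the measurable sets of `(Ω, 𝒜)` with values in the bounded operators on `H`. -/
structure Observable (Ω : Type*) [MeasurableSpace Ω] (H : Type*) [NormedAddCommGroup H]
    [InnerProductSpace ℂ H] [CompleteSpace H] where
  toFun : Set Ω → (H →L[ℂ] H)
  pos : ∀ X : Set Ω, MeasurableSet X → (toFun X).IsPositive
  normalized : toFun Set.univ = 1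
  sigmaAdditive : ∀ f : ℕ → Set Ω, (∀ i, MeasurableSet (f i)) →
    Pairwise (Function.onFun Disjoint f) → ∀ φ : H,
      HasSum (fun i => ev (toFun (f i)) φ) (ev (toFun (⋃ i, f i)) φ)

/-- The Löwner order on bounded operators: `opLE A B` iff `B - A` is positive. -/
def opLE {H : Type*} [NormedAddCommGroup H] [InnerProductSpace ℂ H] [CompleteSpace H]
    (A B : H →L[ℂ] H) : Prop :=
  (B - A).IsPositive

namespace Observable

variable {H : Type*} [NormedAddCommGroup H] [InnerProductSpace ℂ H] [CompleteSpace H]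

/-- The range `ran(E) = {E(X) | X ∈ 𝒜}` of an observable. -/
def ran {Ω : Type*} [MeasurableSpace Ω] (E : Observable Ω H) : Set (H →L[ℂ] H) :=
  {A | ∃ X : Set Ω, MeasurableSet X ∧ A = E.toFun X}

/-- A projection valued observable: every value is an orthogonal projection. -/
def ProjectionValued {Ω : Type*} [MeasurableSpace Ω] (E : Observable Ω H) : Prop :=
  ∀ X : Set Ω, MeasurableSet X → IsSelfAdjoint (E.toFun X) ∧ IsIdempotentElem (E.toFun X)

/-- A regular observable: for every `X` with `O ≠ E(X) ≠ I`, neither `E(X) ≤ (1/2)I`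
nor `(1/2)I ≤ E(X)`. -/
def Regular {Ω : Type*} [MeasurableSpace Ω] (E : Observable Ω H) : Prop :=
  ∀ X : Set Ω, MeasurableSet X → E.toFun X ≠ 0 → E.toFun X ≠ 1 →
    ¬ opLE (E.toFun X) ((1/2 : ℂ) • 1) ∧ ¬ opLE ((1/2 : ℂ) • 1) (E.toFun X)

end Observable

variable {H : Type*} [NormedAddCommGroup H] [InnerProductSpace ℂ H] [CompleteSpace H]

/-- Coexistence: the union of the ranges of `E₁` and `E₂` is contained in the range
of a third observable. -/
def Coexistent {Ω₁ Ω₂ : Type*} [MeasurableSpace Ω₁] [MeasurableSpace Ω₂]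
    (E₁ : Observable Ω₁ H) (E₂ : Observable Ω₂ H) : Prop :=
  ∃ (Ω : Type) (_m : MeasurableSpace Ω) (E : Observable Ω H),
    E₁.ran ∪ E₂.ran ⊆ E.ran

/-- Commensurability: coexistence witnessed by a projection valued observable. -/
def CommensurableObs {Ω₁ Ω₂ : Type*} [MeasurableSpace Ω₁] [MeasurableSpace Ω₂]
    (E₁ : Observable Ω₁ H) (E₂ : Observable Ω₂ H) : Prop :=
  ∃ (Ω : Type) (_m : MeasurableSpace Ω) (E : Observable Ω H),
    E.ProjectionValued ∧ E₁.ran ∪ E₂.ran ⊆ E.ran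

/-- Functional coexistence: `E₁` and `E₂` are obtained from a single observable `E` as
preimages under measurable functions. -/
def FunctionallyCoexistent {Ω₁ Ω₂ : Type*} [MeasurableSpace Ω₁] [MeasurableSpace Ω₂]
    (E₁ : Observable Ω₁ H) (E₂ : Observable Ω₂ H) : Prop :=
  ∃ (Ω : Type) (_m : MeasurableSpace Ω) (E : Observable Ω H)
    (f₁ : Ω → Ω₁) (f₂ : Ω → Ω₂),
      Measurable f₁ ∧ Measurable f₂ ∧
      (∀ X : Set Ω₁, MeasurableSet X → E₁.toFun X = E.toFun (f₁ ⁻¹' X)) ∧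
      (∀ Y : Set Ω₂, MeasurableSet Y → E₂.toFun Y = E.toFun (f₂ ⁻¹' Y))

/-- A positive operator bimeasure: positive values, and each partial map is weakly
σ-additive. -/
def IsPOBimeasure {Ω₁ Ω₂ : Type*} [MeasurableSpace Ω₁] [MeasurableSpace Ω₂]
    (B : Set Ω₁ → Set Ω₂ → (H →L[ℂ] H)) : Prop :=
  (∀ (X : Set Ω₁) (Y : Set Ω₂), MeasurableSet X → MeasurableSet Y → (B X Y).IsPositive) ∧
  (∀ Y : Set Ω₂, MeasurableSet Y → ∀ f : ℕ → Set Ω₁, (∀ i, MeasurableSet (f i)) →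
    Pairwise (Function.onFun Disjoint f) → ∀ φ : H,
      HasSum (fun i => ev (B (f i) Y) φ) (ev (B (⋃ i, f i) Y) φ)) ∧
  (∀ X : Set Ω₁, MeasurableSet X → ∀ g : ℕ → Set Ω₂, (∀ i, MeasurableSet (g i)) →
    Pairwise (Function.onFun Disjoint g) → ∀ φ : H,
      HasSum (fun i => ev (B X (g i)) φ) (ev (B X (⋃ i, g i)) φ))

/-- `B` is a biobservable for `E₁` and `E₂`. -/
def IsBiobservable {Ω₁ Ω₂ : Type*} [MeasurableSpace Ω₁] [MeasurableSpace Ω₂]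
    (B : Set Ω₁ → Set Ω₂ → (H →L[ℂ] H))
    (E₁ : Observable Ω₁ H) (E₂ : Observable Ω₂ H) : Prop :=
  IsPOBimeasure B ∧ B Set.univ Set.univ = 1 ∧
  (∀ X : Set Ω₁, MeasurableSet X → B X Set.univ = E₁.toFun X) ∧
  (∀ Y : Set Ω₂, MeasurableSet Y → B Set.univ Y = E₂.toFun Y)

/-- `E₁` and `E₂` have a biobservable. -/
def HasBiobservable {Ω₁ Ω₂ : Type*} [MeasurableSpace Ω₁] [MeasurableSpace Ω₂]
    (E₁ : Observable Ω₁ H) (E₂ : Observable Ω₂ H) : Prop :=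
  ∃ B : Set Ω₁ → Set Ω₂ → (H →L[ℂ] H), IsBiobservable B E₁ E₂

/-- `F` is a joint observable of `E₁` and `E₂`: its marginals are `E₁` and `E₂`. -/
def IsJointObservable {Ω₁ Ω₂ : Type*} [MeasurableSpace Ω₁] [MeasurableSpace Ω₂]
    (F : Observable (Ω₁ × Ω₂) H)
    (E₁ : Observable Ω₁ H) (E₂ : Observable Ω₂ H) : Prop :=
  (∀ X : Set Ω₁, MeasurableSet X → F.toFun (X ×ˢ (Set.univ : Set Ω₂)) = E₁.toFun X) ∧
  (∀ Y : Set Ω₂, MeasurableSet Y → F.toFun ((Set.univ : Set Ω₁) ×ˢ Y) = E₂.toFun Y)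

/-- `E₁` and `E₂` have a joint observable. -/
def HasJointObservable {Ω₁ Ω₂ : Type*} [MeasurableSpace Ω₁] [MeasurableSpace Ω₂]
    (E₁ : Observable Ω₁ H) (E₂ : Observable Ω₂ H) : Prop :=
  ∃ F : Observable (Ω₁ × Ω₂) H, IsJointObservable F E₁ E₂

/-- The commutativity domain of two observables. -/
def comSet {Ω₁ Ω₂ : Type*} [MeasurableSpace Ω₁] [MeasurableSpace Ω₂]
    (E₁ : Observable Ω₁ H) (E₂ : Observable Ω₂ H) : Set H :=
  {φ | ∀ (X : Set Ω₁) (Y : Set Ω₂), MeasurableSet X → MeasurableSet Y →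
    (E₁.toFun X) ((E₂.toFun Y) φ) = (E₂.toFun Y) ((E₁.toFun X) φ)}

/-- `ran(E)` is a Boolean algebra with respect to the order inherited from the effects,
with complement `A ↦ I - A`. -/
def RanIsBoolean {Ω : Type*} [MeasurableSpace Ω] (E : Observable Ω H) : Prop :=
  ∃ inst : BooleanAlgebra E.ran,
    (∀ a b : E.ran, (letI := inst; a ≤ b) ↔ opLE (a : H →L[ℂ] H) (b : H →L[ℂ] H)) ∧
    (∀ a : E.ran, letI := inst; ((aᶜ : E.ran) : H →L[ℂ] H) = 1 - (a : H →L[ℂ] H))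


section AuxHelpers
set_option linter.unusedSectionVars false
open ComplexOrder
variable {H : Type*} [NormedAddCommGroup H] [InnerProductSpace ℂ H] [CompleteSpace H]

lemma ev_zero' (φ : H) : ev (0 : H →L[ℂ] H) φ = 0 := by simp [ev]

lemma ev_add' (S T : H →L[ℂ] H) (φ : H) : ev (S + T) φ = ev S φ + ev T φ := by
  simp [ev, inner_add_right]

lemma ev_sub' (S T : H →L[ℂ] H) (φ : H) : ev (S - T) φ = ev S φ - ev T φ := by
  simp [ev, inner_sub_right]

lemma ev_sum' {ι : Type*} (s : Finset ι) (f : ι → (H →L[ℂ] H)) (φ : H) :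
    ev (∑ i ∈ s, f i) φ = ∑ i ∈ s, ev (f i) φ := by
  classical
  induction s using Finset.cons_induction with
  | empty => simp [ev]
  | cons a s ha ih => rw [Finset.sum_cons, Finset.sum_cons, ev_add', ih]

lemma eq_of_ev {S T : H →L[ℂ] H} (h : ∀ φ, ev S φ = ev T φ) : S = T := by
  have h2 : ∀ x : H, @inner ℂ H _ (((S - T) : H →ₗ[ℂ] H) x) x = 0 := by
    intro x
    have h0 : ev (S - T) x = 0 := by rw [ev_sub', h, sub_self]
    have h3 : (starRingEnd ℂ) (ev (S - T) x) = 0 := by rw [h0]; simp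
    rw [ev, inner_conj_symm] at h3
    simpa [inner_sub_left] using h3
  have h4 := (inner_map_self_eq_zero ((S - T) : H →ₗ[ℂ] H)).mp h2
  have h5 : S - T = 0 := by
    apply ContinuousLinearMap.coe_injective
    simpa using h4
  rw [← sub_eq_zero]; exact h5

lemma isPositive_iff_ev (T : H →L[ℂ] H) : T.IsPositive ↔ ∀ φ, 0 ≤ ev T φ := by
  rw [ContinuousLinearMap.isPositive_iff_complex]
  apply forall_congr'
  intro x
  have hc : @inner ℂ H _ (T x) x = (starRingEnd ℂ) (ev T x) := by rw [ev, inner_conj_symm]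
  rw [hc]
  constructor
  · rintro ⟨h1, h2⟩
    rw [Complex.le_def]
    constructor
    · simpa using h2
    · have := congrArg Complex.im h1
      simp at this
      simpa using this.symm
  · intro h
    rw [Complex.le_def] at h
    constructor
    · apply Complex.ext <;> simp [h.2.symm]
    · simpa using h.1

lemma opLE_iff (A B : H →L[ℂ] H) : opLE A B ↔ ∀ φ, ev A φ ≤ ev B φ := by
  rw [opLE, isPositive_iff_ev]
  exact forall_congr' fun φ => by rw [ev_sub', sub_nonneg]

lemma opLE_sum_hasSum (T : ℕ → (H →L[ℂ] H)) (S : H →L[ℂ] H)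
    (hpos : ∀ i, (T i).IsPositive)
    (hS : ∀ φ : H, HasSum (fun i => ev (T i) φ) (ev S φ)) (n : ℕ) :
    opLE (∑ i ∈ Finset.range n, T i) S := by
  rw [opLE_iff]
  intro φ
  rw [ev_sum']
  exact sum_le_hasSum _ (fun i _ => (isPositive_iff_ev _).1 (hpos i) φ) (hS φ)

lemma opLE_of_forall_sum_le (T : ℕ → (H →L[ℂ] H)) (S C : H →L[ℂ] H)
    (hpos : ∀ i, (T i).IsPositive)
    (hS : ∀ φ : H, HasSum (fun i => ev (T i) φ) (ev S φ))
    (hC : ∀ n, opLE (∑ i ∈ Finset.range n, T i) C) : opLE S C := by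
  rw [opLE_iff]
  intro φ
  refine hasSum_le_of_sum_le (hS φ) fun s => ?_
  obtain ⟨n, hn⟩ := s.exists_nat_subset_range
  calc ∑ i ∈ s, ev (T i) φ ≤ ∑ i ∈ Finset.range n, ev (T i) φ :=
        Finset.sum_le_sum_of_subset_of_nonneg hn
          (fun i _ _ => (isPositive_iff_ev _).1 (hpos i) φ)
    _ ≤ ev C φ := by rw [← ev_sum']; exact (opLE_iff _ _).1 (hC n) φ

variable {Ω : Type*} [MeasurableSpace Ω]

lemma obs_empty (E : Observable Ω H) : E.toFun ∅ = 0 := by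
  apply eq_of_ev; intro φ
  have h := E.sigmaAdditive (fun _ => ∅) (fun _ => MeasurableSet.empty)
    (fun i j _ => by simp [Function.onFun]) φ
  rw [Set.iUnion_empty] at h
  have h1 : Filter.Tendsto (fun _ : ℕ => ev (E.toFun ∅) φ) Filter.cofinite (nhds 0) :=
    h.summable.tendsto_cofinite_zero
  have h2 := tendsto_nhds_unique h1 tendsto_const_nhds
  rw [ev_zero']
  exact h2.symm

lemma obs_additive (E : Observable Ω H) {X Y : Set Ω} (hX : MeasurableSet X)
    (hY : MeasurableSet Y) (hXY : Disjoint X Y) :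
    E.toFun (X ∪ Y) = E.toFun X + E.toFun Y := by
  classical
  set f : ℕ → Set Ω := fun n => if n = 0 then X else if n = 1 then Y else ∅ with hf
  have hfm : ∀ i, MeasurableSet (f i) := by
    intro i; simp only [hf]; split_ifs <;> first | exact hX | exact hY | exact MeasurableSet.empty
  have hfa : ∀ c : ℕ, c ≠ 0 → c ≠ 1 → f c = ∅ := fun c h0 h1 => by simp [hf, h0, h1]
  have hf0 : f 0 = X := by simp [hf]
  have hf1 : f 1 = Y := by simp [hf]
  have hfd : Pairwise (Function.onFun Disjoint f) := by
    intro a b hab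
    have hgoal : Function.onFun Disjoint f a b = Disjoint (f a) (f b) := rfl
    rw [hgoal]
    by_cases ha0 : a = 0 <;> by_cases ha1 : a = 1 <;> by_cases hb0 : b = 0 <;>
      by_cases hb1 : b = 1 <;>
    first
      | (exfalso; omega)
      | (rw [hfa a ha0 ha1]; exact Set.empty_disjoint _)
      | (rw [hfa b hb0 hb1]; exact Set.disjoint_empty _)
      | (rw [ha0, hb1, hf0, hf1]; exact hXY)
      | (rw [ha1, hb0, hf1, hf0]; exact hXY.symm)
  have hu : (⋃ i, f i) = X ∪ Y := by
    apply Set.Subset.antisymm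
    · refine Set.iUnion_subset fun i => ?_
      by_cases h0 : i = 0
      · simp [hf, h0]
      by_cases h1 : i = 1
      · simp [hf, h0, h1]
      simp [hf, h0, h1]
    · rintro x (hx | hx)
      · exact Set.mem_iUnion.2 ⟨0, by simp [hf, hx]⟩
      · exact Set.mem_iUnion.2 ⟨1, by simp [hf, hx]⟩
  apply eq_of_ev; intro φ
  have h := E.sigmaAdditive f hfm hfd φ
  rw [hu] at h
  have h2 : HasSum (fun i => ev (E.toFun (f i)) φ)
      (∑ i ∈ ({0, 1} : Finset ℕ), ev (E.toFun (f i)) φ) := by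
    apply hasSum_sum_of_ne_finset_zero
    intro i hi
    have h0 : i ≠ 0 := by intro h'; apply hi; simp [h']
    have h1 : i ≠ 1 := by intro h'; apply hi; simp [h']
    simp [hf, h0, h1, obs_empty E, ev_zero']
  have h3 := h.unique h2
  rw [h3, Finset.sum_pair (by norm_num : (0:ℕ) ≠ 1), ev_add']
  simp [hf]

lemma obs_mono (E : Observable Ω H) {X Y : Set Ω} (hX : MeasurableSet X)
    (hY : MeasurableSet Y) (hXY : X ⊆ Y) (φ : H) :
    ev (E.toFun X) φ ≤ ev (E.toFun Y) φ := by
  have h1 : E.toFun Y = E.toFun X + E.toFun (Y \ X) := by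
    rw [← obs_additive E hX (hY.diff hX) disjoint_sdiff_self_right, Set.union_diff_cancel hXY]
  rw [h1, ev_add']
  exact le_add_of_nonneg_right ((isPositive_iff_ev _).1 (E.pos _ (hY.diff hX)) φ)

lemma obs_zero_mono (E : Observable Ω H) {X Y : Set Ω} (hX : MeasurableSet X)
    (hY : MeasurableSet Y) (hXY : X ⊆ Y) (h : E.toFun Y = 0) : E.toFun X = 0 := by
  apply eq_of_ev; intro φ
  have h1 := obs_mono E hX hY hXY φ
  rw [h, ev_zero'] at h1
  have h2 := (isPositive_iff_ev _).1 (E.pos X hX) φ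
  rw [ev_zero']
  exact le_antisymm h1 h2

lemma obs_zero_union (E : Observable Ω H) {X Y : Set Ω} (hX : MeasurableSet X)
    (hY : MeasurableSet Y) (h1 : E.toFun X = 0) (h2 : E.toFun Y = 0) :
    E.toFun (X ∪ Y) = 0 := by
  have hu : X ∪ Y = X ∪ (Y \ X) := by rw [Set.union_diff_self]
  rw [hu, obs_additive E hX (hY.diff hX) disjoint_sdiff_self_right, h1,
    obs_zero_mono E (hY.diff hX) hY Set.diff_subset h2, add_zero]

lemma obs_zero_biUnion (E : Observable Ω H) {ι : Type*} (Y : ι → Set Ω)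
    (hY : ∀ i, MeasurableSet (Y i)) (s : Finset ι)
    (h : ∀ i ∈ s, E.toFun (Y i) = 0) : E.toFun (⋃ i ∈ s, Y i) = 0 := by
  classical
  induction s using Finset.induction_on with
  | empty => simpa using obs_empty E
  | @insert a s ha ih =>
    rw [Finset.set_biUnion_insert]
    exact obs_zero_union E (hY a) (s.measurableSet_biUnion fun j _ => hY j)
      (h a (Finset.mem_insert_self a s))
      (ih fun i hi => h i (Finset.mem_insert_of_mem hi))

lemma obs_half (E : Observable Ω H) (hreg : E.Regular) {D : Set Ω} (hD : MeasurableSet D)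
    (h2 : ∀ φ : H, ev (E.toFun D) φ + ev (E.toFun D) φ ≤ ev (1 : H →L[ℂ] H) φ) :
    E.toFun D = 0 := by
  rcases eq_or_ne (E.toFun D) 0 with h0 | h0
  · exact h0
  rcases eq_or_ne (E.toFun D) 1 with h1 | h1
  · apply eq_of_ev; intro φ
    have h3 := h2 φ; rw [h1] at h3
    have h4 : ev (1 : H →L[ℂ] H) φ ≤ 0 := add_le_iff_nonpos_left.1 h3
    have h5 : 0 ≤ ev (1 : H →L[ℂ] H) φ :=
      (isPositive_iff_ev _).1 ContinuousLinearMap.isPositive_one φ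
    rw [h1, ev_zero']
    exact le_antisymm h4 h5
  · exfalso
    refine (hreg D hD h0 h1).1 ?_
    rw [opLE_iff]
    intro φ
    have h3 := h2 φ
    have h4 : ev ((1/2 : ℂ) • (1 : H →L[ℂ] H)) φ = (1/2 : ℂ) * ev (1 : H →L[ℂ] H) φ := by
      simp [ev, inner_smul_right]
    have h5 : ev (E.toFun D) φ =
        (1/2 : ℂ) * (ev (E.toFun D) φ + ev (E.toFun D) φ) := by ring
    rw [h4, h5]
    apply mul_le_mul_of_nonneg_left h3
    rw [Complex.le_def]
    norm_num

lemma obs_pair_zero (E : Observable Ω H) (hreg : E.Regular) (A : ℕ → (H →L[ℂ] H))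
    (X₀ : ℕ → Set Ω) (hm : ∀ i, MeasurableSet (X₀ i))
    (hval : ∀ i, A i = E.toFun (X₀ i))
    (hsum : ∀ n : ℕ, opLE (∑ i ∈ Finset.range n, A i) 1)
    {i j : ℕ} (hij : i ≠ j) : E.toFun (X₀ i ∩ X₀ j) = 0 := by
  apply obs_half E hreg ((hm i).inter (hm j))
  intro φ
  have hDi := obs_mono E ((hm i).inter (hm j)) (hm i) Set.inter_subset_left φ
  have hDj := obs_mono E ((hm i).inter (hm j)) (hm j) Set.inter_subset_right φ
  set n := max i j + 1 with hn
  have hsub : ({i, j} : Finset ℕ) ⊆ Finset.range n := by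
    intro k hk
    simp only [Finset.mem_insert, Finset.mem_singleton] at hk
    rcases hk with rfl | rfl
    · exact Finset.mem_range.2 (Nat.lt_succ_of_le (le_max_left _ _))
    · exact Finset.mem_range.2 (Nat.lt_succ_of_le (le_max_right _ _))
  have h1 : ev (A i) φ + ev (A j) φ ≤ ev (∑ k ∈ Finset.range n, A k) φ := by
    rw [ev_sum']
    have hle : ∑ k ∈ ({i, j} : Finset ℕ), ev (A k) φ ≤ ∑ k ∈ Finset.range n, ev (A k) φ :=
      Finset.sum_le_sum_of_subset_of_nonneg hsub
        (fun k _ _ => by rw [hval k]; exact (isPositive_iff_ev _).1 (E.pos _ (hm k)) φ)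
    rwa [Finset.sum_pair hij] at hle
  have h2 : ev (∑ k ∈ Finset.range n, A k) φ ≤ ev (1 : H →L[ℂ] H) φ :=
    (opLE_iff _ _).1 (hsum n) φ
  calc ev (E.toFun (X₀ i ∩ X₀ j)) φ + ev (E.toFun (X₀ i ∩ X₀ j)) φ
      ≤ ev (A i) φ + ev (A j) φ :=
        add_le_add (by rw [hval i]; exact hDi) (by rw [hval j]; exact hDj)
    _ ≤ ev (1 : H →L[ℂ] H) φ := le_trans h1 h2

lemma exists_disjoint_rep (E : Observable Ω H) (hreg : E.Regular)
    (A : ℕ → (H →L[ℂ] H)) (hA : ∀ i, A i ∈ E.ran)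
    (hsum : ∀ n : ℕ, opLE (∑ i ∈ Finset.range n, A i) 1) :
    ∃ X : ℕ → Set Ω, (∀ i, MeasurableSet (X i)) ∧ Pairwise (Function.onFun Disjoint X) ∧
      ∀ i, A i = E.toFun (X i) := by
  classical
  choose X₀ hm hval using hA
  have hpz : ∀ i j : ℕ, i ≠ j → E.toFun (X₀ i ∩ X₀ j) = 0 :=
    fun i j h => obs_pair_zero E hreg A X₀ hm hval hsum h
  refine ⟨fun i => X₀ i \ ⋃ j ∈ Finset.range i, X₀ j, fun i => ?_, ?_, fun i => ?_⟩
  · exact (hm i).diff ((Finset.range i).measurableSet_biUnion fun j _ => hm j)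
  · have key : ∀ a b : ℕ, a < b →
        Disjoint (X₀ a \ ⋃ k ∈ Finset.range a, X₀ k) (X₀ b \ ⋃ k ∈ Finset.range b, X₀ k) := by
      intro a b hab
      refine Set.disjoint_left.2 fun x hxa hxb => ?_
      exact hxb.2 (Set.mem_iUnion₂.2 ⟨a, Finset.mem_range.2 hab, hxa.1⟩)
    intro i j hij
    rcases hij.lt_or_gt with h | h
    · exact key i j h
    · exact (key j i h).symm
  · set B : Set Ω := ⋃ j ∈ Finset.range i, X₀ j with hB
    have hmB : MeasurableSet B := (Finset.range i).measurableSet_biUnion fun j _ => hm j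
    have hsplit : X₀ i = (X₀ i \ B) ∪ (X₀ i ∩ B) := (Set.diff_union_inter _ _).symm
    have hzero : E.toFun (X₀ i ∩ B) = 0 := by
      have hinter : X₀ i ∩ B = ⋃ j ∈ Finset.range i, (X₀ i ∩ X₀ j) := by
        rw [hB, Set.inter_iUnion₂]
      rw [hinter]
      exact obs_zero_biUnion E _ (fun j => (hm i).inter (hm j)) _
        (fun j hj => hpz i j (Finset.mem_range.1 hj).ne')
    have hdisj : Disjoint (X₀ i \ B) (X₀ i ∩ B) :=
      disjoint_sdiff_self_left.mono_right Set.inter_subset_right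
    calc A i = E.toFun (X₀ i) := hval i
      _ = E.toFun ((X₀ i \ B) ∪ (X₀ i ∩ B)) := by rw [← hsplit]
      _ = E.toFun (X₀ i \ B) + E.toFun (X₀ i ∩ B) :=
          obs_additive E ((hm i).diff hmB) ((hm i).inter hmB) hdisj
      _ = E.toFun (X₀ i \ B) := by rw [hzero, add_zero]

end AuxHelpers

/-- For a regular observable `E`, every summable sequence in `ran(E)` can be
realized on pairwise disjoint sets; in particular the supremum of the partial sums is
`E(⋃ᵢ Xᵢ) = ∑ᵢ Aᵢ`, which belongs to `ran(E)`. -/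
theorem regular_summable_sequence
    {Ω : Type*} [MeasurableSpace Ω] (E : Observable Ω H) (hreg : E.Regular)
    (A : ℕ → (H →L[ℂ] H)) (hA : ∀ i, A i ∈ E.ran)
    (hsum : ∀ n : ℕ, opLE (∑ i ∈ Finset.range n, A i) 1) :
    ∃ X : ℕ → Set Ω,
      (∀ i, MeasurableSet (X i)) ∧ Pairwise (Function.onFun Disjoint X) ∧
      (∀ i, A i = E.toFun (X i)) ∧
      (∀ n : ℕ, opLE (∑ i ∈ Finset.range n, A i) (E.toFun (⋃ i, X i))) ∧
      (∀ C : H →L[ℂ] H, (∀ n : ℕ, opLE (∑ i ∈ Finset.range n, A i) C) →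
        opLE (E.toFun (⋃ i, X i)) C) ∧
      (∀ φ : H, HasSum (fun i => ev (A i) φ) (ev (E.toFun (⋃ i, X i)) φ)) ∧
      E.toFun (⋃ i, X i) ∈ E.ran := by
  obtain ⟨X, hXm, hXd, hXe⟩ := exists_disjoint_rep E hreg A hA hsum
  have hpos : ∀ i, (A i).IsPositive := fun i => by rw [hXe i]; exact E.pos _ (hXm i)
  have hhs : ∀ φ : H, HasSum (fun i => ev (A i) φ) (ev (E.toFun (⋃ i, X i)) φ) := by
    intro φ
    have h := E.sigmaAdditive X hXm hXd φ
    simpa only [← hXe] using h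
  exact ⟨X, hXm, hXd, hXe, fun n => opLE_sum_hasSum A _ hpos hhs n,
    fun C hC => opLE_of_forall_sum_le A _ C hpos hhs hC, hhs,
    ⟨⋃ i, X i, MeasurableSet.iUnion hXm, rfl⟩⟩


end
end

section
/- Let E : 𝒜 → L(H) be a positive normalized operator measure (an observable). If E(X)² = E(X) for some X ∈ 𝒜 (i.e., E(X) is a projection), then E(X)E(Y) = E(Y)E(X) for all Y ∈ 𝒜. -/
open MeasureTheory

noncomputable section

variable {H : Type*} [NormedAddCommGroup H] [InnerProductSpace ℂ H] [CompleteSpace H]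

open scoped InnerProductSpace

section AuxLemmas

variable {H : Type*} [NormedAddCommGroup H] [InnerProductSpace ℂ H] [CompleteSpace H]

set_option synthInstance.maxHeartbeats 1000000 in
/-- If `T` is positive and `re ⟪T φ, φ⟫ = 0`, then `T φ = 0`. -/
lemma aux_pos_apply_eq_zero (T : H →L[ℂ] H) (hT : T.IsPositive) (φ : H)
    (h : RCLike.re ⟪T φ, φ⟫_ℂ = 0) : T φ = 0 := by
  have hT' : (0 : H →L[ℂ] H) ≤ T := (ContinuousLinearMap.nonneg_iff_isPositive T).2 hT
  set s := CFC.sqrt T with hs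
  have hss : s * s = T := CFC.sqrt_mul_sqrt_self T hT'
  have hsnn : (0 : H →L[ℂ] H) ≤ s := CFC.sqrt_nonneg T
  have hssa : IsSelfAdjoint s :=
    ((ContinuousLinearMap.nonneg_iff_isPositive s).1 hsnn).isSelfAdjoint
  have hadj : ContinuousLinearMap.adjoint s = s := ContinuousLinearMap.isSelfAdjoint_iff'.1 hssa
  have h1 : ⟪T φ, φ⟫_ℂ = ⟪s φ, s φ⟫_ℂ := by
    rw [← hss]
    calc ⟪(s * s) φ, φ⟫_ℂ = ⟪s (s φ), φ⟫_ℂ := rfl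
    _ = ⟪s φ, s φ⟫_ℂ := by rw [← hadj, ContinuousLinearMap.adjoint_inner_left, hadj]
  have h2 : (‖s φ‖ : ℝ)^2 = 0 := by
    have h0 := inner_self_eq_norm_sq (𝕜 := ℂ) (s φ)
    rw [h1] at h
    rw [← h0, h]
  have h3 : s φ = 0 := norm_eq_zero.1 (sq_eq_zero_iff.1 h2)
  rw [← hss]
  show s (s φ) = 0
  rw [h3, map_zero]

/-- An operator on a complex Hilbert space is determined by its expectations. -/
lemma aux_ext_of_ev {T S : H →L[ℂ] H} (h : ∀ φ : H, ev T φ = ev S φ) : T = S := by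
  have h' : ∀ φ : H, ⟪((T : H →ₗ[ℂ] H) - (S : H →ₗ[ℂ] H)) φ, φ⟫_ℂ = 0 := by
    intro φ
    have := h φ
    simp only [ev] at this
    have h2 := congrArg (starRingEnd ℂ) this
    rw [inner_conj_symm, inner_conj_symm] at h2
    simp only [LinearMap.sub_apply, ContinuousLinearMap.coe_coe, inner_sub_left]
    exact sub_eq_zero.2 h2
  have := (inner_map_self_eq_zero ((T : H →ₗ[ℂ] H) - (S : H →ₗ[ℂ] H))).1 h'
  have hTS : (T : H →ₗ[ℂ] H) = (S : H →ₗ[ℂ] H) := by rwa [sub_eq_zero] at this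
  exact ContinuousLinearMap.coe_injective hTS

lemma aux_ev_add (T S : H →L[ℂ] H) (φ : H) : ev (T + S) φ = ev T φ + ev S φ := by
  simp [ev, ContinuousLinearMap.add_apply, inner_add_right]

variable {Ω : Type*} [MeasurableSpace Ω] (E : Observable Ω H)

lemma aux_empty : E.toFun ∅ = 0 := by
  apply aux_ext_of_ev
  intro φ
  have h := E.sigmaAdditive (fun _ => (∅ : Set Ω)) (fun _ => MeasurableSet.empty)
    (fun i j hij => Set.disjoint_empty ∅) φ
  simp only [Set.iUnion_empty] at h
  have hsum : Summable (fun _ : ℕ => ev (E.toFun ∅) φ) := h.summable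
  have : ev (E.toFun ∅) φ = 0 := by
    by_contra hne
    exact hne ((summable_const_iff _).1 hsum)
  rw [this]
  simp [ev]

lemma aux_add {A B : Set Ω} (hA : MeasurableSet A) (hB : MeasurableSet B)
    (hAB : Disjoint A B) : E.toFun (A ∪ B) = E.toFun A + E.toFun B := by
  classical
  set f : ℕ → Set Ω := fun n => if n = 0 then A else if n = 1 then B else ∅ with hf
  have hmeas : ∀ i, MeasurableSet (f i) := by
    intro i
    simp only [hf]
    split_ifs <;> first | exact hA | exact hB | exact MeasurableSet.empty
  have hdisj : Pairwise (Function.onFun Disjoint f) := by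
    intro i j hij
    simp only [Function.onFun, hf]
    split_ifs with h1 h2 h3 h4 h5 h6 h7 h8 <;>
      simp_all <;>
      first
        | exact hAB | exact hAB.symm
        | exact Set.disjoint_empty _ | exact Set.empty_disjoint _
  have hunion : (⋃ i, f i) = A ∪ B := by
    apply subset_antisymm
    · refine Set.iUnion_subset fun i => ?_
      simp only [hf]
      split_ifs <;> simp
    · rintro x (hx | hx)
      · exact Set.mem_iUnion.2 ⟨0, by simp [hf, hx]⟩
      · exact Set.mem_iUnion.2 ⟨1, by simp [hf, hx]⟩
  apply aux_ext_of_ev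
  intro φ
  have h := E.sigmaAdditive f hmeas hdisj φ
  rw [hunion] at h
  have hg : ∀ i, ev (E.toFun (f i)) φ =
      (fun i => if i = 0 then ev (E.toFun A) φ else if i = 1 then ev (E.toFun B) φ else 0) i := by
    intro i
    simp only [hf]
    split_ifs <;> simp [aux_empty, ev]
  rw [show (fun i => ev (E.toFun (f i)) φ) = _ from funext hg] at h
  have h2 : HasSum
      (fun i => if i = 0 then ev (E.toFun A) φ else if i = 1 then ev (E.toFun B) φ else 0)
      (ev (E.toFun A) φ + ev (E.toFun B) φ) := by
    have := hasSum_sum_of_ne_finset_zero (s := ({0, 1} : Finset ℕ)) (L := SummationFilter.unconditional ℕ)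
      (f := fun i => if i = 0 then ev (E.toFun A) φ else if i = 1 then ev (E.toFun B) φ else 0)
      (by intro i hi; simp only [Finset.mem_insert, Finset.mem_singleton, not_or] at hi
          simp [hi.1, hi.2])
    simpa using this
  rw [h.unique h2, aux_ev_add]

/-- A positive operator dominated by a projection commutes with it. -/
lemma aux_commute_of_le_proj {P T : H →L[ℂ] H} (hPsa : IsSelfAdjoint P)
    (hPidem : P * P = P) (hT : T.IsPositive) (hPT : (P - T).IsPositive) :
    T * P = T ∧ P * T = T := by
  have hzero : ∀ φ : H, T (φ - P φ) = 0 := by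
    intro φ
    set ψ := φ - P φ with hψ
    have hPψ : P ψ = 0 := by
      have : P (P φ) = P φ := by
        have := congrArg (fun S => S φ) hPidem
        simpa [ContinuousLinearMap.mul_apply] using this
      simp [hψ, map_sub, this]
    apply aux_pos_apply_eq_zero T hT
    have h1 : 0 ≤ RCLike.re ⟪T ψ, ψ⟫_ℂ := (RCLike.nonneg_iff.1 (hT.inner_nonneg_left ψ)).1
    have h2 : 0 ≤ RCLike.re ⟪(P - T) ψ, ψ⟫_ℂ := (RCLike.nonneg_iff.1 (hPT.inner_nonneg_left ψ)).1
    have h3 : RCLike.re ⟪(P - T) ψ, ψ⟫_ℂ = - RCLike.re ⟪T ψ, ψ⟫_ℂ := by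
      simp [ContinuousLinearMap.sub_apply, inner_sub_left, hPψ]
    linarith [h2, h3 ▸ h2]
  have hTP : T * P = T := by
    ext φ
    have := hzero φ
    rw [map_sub, sub_eq_zero] at this
    simpa [ContinuousLinearMap.mul_apply] using this.symm
  refine ⟨hTP, ?_⟩
  have hTsa : IsSelfAdjoint T := hT.isSelfAdjoint
  calc P * T = star (T * P) := by rw [star_mul, hPsa.star_eq, hTsa.star_eq]
  _ = T := by rw [hTP, hTsa.star_eq]

end AuxLemmas

/-- If `E(X)` is a projection for some `X`, then `E(X)` commutes with every
value `E(Y)` of the observable. -/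
theorem projection_value_commutes
    {Ω : Type*} [MeasurableSpace Ω] (E : Observable Ω H)
    (X : Set Ω) (hX : MeasurableSet X)
    (hproj : E.toFun X * E.toFun X = E.toFun X) :
    ∀ Y : Set Ω, MeasurableSet Y → E.toFun X * E.toFun Y = E.toFun Y * E.toFun X := by
  intro Y hY
  classical
  set P := E.toFun X with hP
  have hPpos := E.pos X hX
  have hPsa : IsSelfAdjoint P := hPpos.isSelfAdjoint
  set T₁ := E.toFun (X ∩ Y) with hT₁
  set T₂ := E.toFun (Xᶜ ∩ Y) with hT₂
  have hm₁ : MeasurableSet (X ∩ Y) := hX.inter hY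
  have hm₂ : MeasurableSet (Xᶜ ∩ Y) := hX.compl.inter hY
  have hT₁pos := E.pos _ hm₁
  have hT₂pos := E.pos _ hm₂
  -- E(Y) = T₁ + T₂
  have hYsplit : E.toFun Y = T₁ + T₂ := by
    have hu : (X ∩ Y) ∪ (Xᶜ ∩ Y) = Y := by
      rw [← Set.union_inter_distrib_right, Set.union_compl_self, Set.univ_inter]
    have h := aux_add E hm₁ hm₂ (Set.disjoint_of_subset_left Set.inter_subset_left
      (Set.disjoint_of_subset_right Set.inter_subset_left disjoint_compl_right))
    rw [hu] at h
    exact h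
  -- P - T₁ is positive
  have hXsplit : P = T₁ + E.toFun (X ∩ Yᶜ) := by
    have hu : (X ∩ Y) ∪ (X ∩ Yᶜ) = X := Set.inter_union_compl X Y
    have h := aux_add E hm₁ (hX.inter hY.compl)
      (Set.disjoint_of_subset_left Set.inter_subset_right
        (Set.disjoint_of_subset_right Set.inter_subset_right disjoint_compl_right))
    rw [hu] at h
    exact h
  have hPT₁ : (P - T₁).IsPositive := by
    have : P - T₁ = E.toFun (X ∩ Yᶜ) := by rw [hXsplit]; abel
    rw [this]; exact E.pos _ (hX.inter hY.compl)
  -- 1 - P = E(Xᶜ)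
  have hcompl : E.toFun Xᶜ = 1 - P := by
    have h := aux_add E hX hX.compl disjoint_compl_right
    rw [Set.union_compl_self, E.normalized] at h
    rw [eq_sub_iff_add_eq, add_comm]
    exact h.symm
  -- (1-P) - T₂ is positive
  have hQidem : (1 - P) * (1 - P) = 1 - P := by
    have h : (1 - P) * (1 - P) = 1 - P - P + P * P := by noncomm_ring
    rw [h, hproj]; abel
  have hQsa : IsSelfAdjoint (1 - P) := (IsSelfAdjoint.one (R := H →L[ℂ] H)).sub hPsa
  have hQT₂ : ((1 - P) - T₂).IsPositive := by
    have hu : (Xᶜ ∩ Y) ∪ (Xᶜ ∩ Yᶜ) = Xᶜ := Set.inter_union_compl Xᶜ Y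
    have hadd : E.toFun Xᶜ = T₂ + E.toFun (Xᶜ ∩ Yᶜ) := by
      have h := aux_add E hm₂ (hX.compl.inter hY.compl)
        (Set.disjoint_of_subset_left Set.inter_subset_right
          (Set.disjoint_of_subset_right Set.inter_subset_right disjoint_compl_right))
      rw [hu] at h
      exact h
    have : (1 - P) - T₂ = E.toFun (Xᶜ ∩ Yᶜ) := by
      rw [← hcompl, hadd]; abel
    rw [this]; exact E.pos _ (hX.compl.inter hY.compl)
  obtain ⟨hT₁P, hPT₁'⟩ := aux_commute_of_le_proj hPsa hproj hT₁pos hPT₁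
  obtain ⟨hT₂Q, hQT₂'⟩ := aux_commute_of_le_proj hQsa hQidem hT₂pos hQT₂
  -- From (1-P) commutation: P * T₂ = 0 and T₂ * P = 0
  have hPT₂ : P * T₂ = 0 := by
    have h : P * T₂ = T₂ - (1 - P) * T₂ := by noncomm_ring
    rw [h, hQT₂', sub_self]
  have hT₂P : T₂ * P = 0 := by
    have h : T₂ * P = T₂ - T₂ * (1 - P) := by noncomm_ring
    rw [h, hT₂Q, sub_self]
  rw [hYsplit, mul_add, add_mul, hPT₁', hT₁P, hPT₂, hT₂P]


end
end
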